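/- Let Γ be a supercontracted 5-colored graph of order 2p, i.e., for each color c the subgraph Γ_{ĉ} spanned by the other four colors is connected. Then the reduced G-degree ω'_G(Γ) = ω_G(Γ)/3 satisfies ω'_G(Γ) ≥ p − 1. -/

import Mathlib

/-- An `n`-colored graph: a finite connected `n`-regular multigraph without loops,
equipped with a proper edge-coloring by the `n` colors `Fin n`. -/
structure ColoredGraph (n : ℕ) where
  V : Type
  E : Type
  [fintypeV : Fintype V]
  [fintypeE : Fintype E]
  ends : E → Sym2 V
  no_loops : ∀ e : E, ¬ (ends e).IsDiag
  color : E → Fin n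
  proper : ∀ e₁ e₂ : E, e₁ ≠ e₂ → color e₁ = color e₂ →
      ∀ v : V, ¬ (v ∈ ends e₁ ∧ v ∈ ends e₂)
  regular : ∀ v : V, Set.ncard {e : E | v ∈ ends e} = n
  connected : ∀ v w : V,
      Relation.ReflTransGen (fun a b => ∃ e : E, a ∈ ends e ∧ b ∈ ends e) v w

attribute [instance] ColoredGraph.fintypeV ColoredGraph.fintypeE

namespace ColoredGraph

variable {n : ℕ} (G : ColoredGraph n)

/-- Reachability using only edges whose color lies in `Δ`. -/
def Reach (Δ : Set (Fin n)) (v w : G.V) : Prop :=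
  Relation.EqvGen (fun a b => ∃ e : G.E, G.color e ∈ Δ ∧ a ∈ G.ends e ∧ b ∈ G.ends e) v w

/-- The `Δ`-residue containing `v`. -/
def residue (Δ : Set (Fin n)) (v : G.V) : Set G.V := {u | G.Reach Δ v u}

def residueSetoid (Δ : Set (Fin n)) : Setoid G.V :=
  ⟨G.Reach Δ, Relation.EqvGen.is_equivalence _⟩

/-- number of `Δ`-residues, i.e. connected components of the spanning subgraph `Γ_Δ`. -/
noncomputable def numResidues (Δ : Set (Fin n)) : ℕ :=
  Nat.card (Quotient (G.residueSetoid Δ))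

end ColoredGraph

namespace ColoredGraph

variable (G : ColoredGraph 5)

/-- the G-degree of a 5-colored graph of order 2p: the sum over the 12 cyclic
permutations ε of the five colors (up to inversion) of the regular genus ρ_ε,
where 2 − 2ρ_ε = Σ_{j∈Z₅} g_{ε_j,ε_{j+1}} + (1−4)p.  Each such permutation class
is represented by exactly 10 bijections ZMod 5 → Fin 5. -/
noncomputable def gDegree (p : ℕ) : ℚ :=
  (1 / 10) * ∑ᶠ ε : {ε : ZMod 5 → Fin 5 // Function.Bijective ε},
    (2 - ((∑ j : ZMod 5, (G.numResidues {ε.val j, ε.val (j + 1)} : ℚ)) - 3 * (p : ℚ))) / 2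

/-- supercontracted: for each color the residue spanned by the other four colors
is connected. -/
def Supercontracted : Prop :=
  ∀ c : Fin 5, G.numResidues {x | x ≠ c} = 1

end ColoredGraph

/-!
For a cyclic order `ε` of colours whose residue `Γ_{range ε}` is connected, the bicoloured cycles
of consecutive colour pairs are the faces of a cellular embedding: their mod-2 edge vectors lie in
the cycle space of `Γ_{range ε}`, of dimension `E - V + 1`, and since every edge lies on exactly
two faces the only relation between them is that all of them sum to zero. This is Euler's
inequality `F - E + V ≤ 2`, i.e. the regular genus is nonnegative.

For a supercontracted 5-coloured graph and a cyclic order `ε` of the five colours, apply it to the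
four colours other than `ε m`, taken in the order `ε (m + 2 ^ k)`; summing over `m` covers every
pair of colours twice, so the pentagon sum `∑ g_{ε j, ε (j+1)}` plus the pentagram sum
`∑ g_{ε j, ε (j+2)}` is at most `5p + 5`. Precomposing `ε` with `j ↦ 2j` exchanges the two
sums, so on average over `ε` the pentagon sum is at most `(5p + 5)/2`, which is
`ω_G ≥ 3(p - 1)`.
-/

open Module in
lemma Submodule.finrank_le_one_of_forall_eq {K ι : Type*} [Field K] [Fintype ι]
    (W : Submodule K (ι → K)) (hW : ∀ c ∈ W, ∀ i j, c i = c j) : finrank K W ≤ 1 := by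
  have hle : W ≤ K ∙ (1 : ι → K) := fun c hc => by
    rw [Submodule.mem_span_singleton]
    rcases isEmpty_or_nonempty ι with _ | ⟨⟨i₀⟩⟩
    · exact ⟨0, Subsingleton.elim _ _⟩
    · exact ⟨c i₀, funext fun j => by simp [hW c hc i₀ j]⟩
  exact (Submodule.finrank_mono hle).trans ((finrank_span_le_card _).trans (by simp))

namespace ColoredGraph

open Finset Module

section General

open Classical

variable {n : ℕ} (G : ColoredGraph n)

lemma card_mem_ends (e : G.E) : #{v | v ∈ G.ends e} = 2 := by
  have hloop := G.no_loops e
  generalize G.ends e = z at hloop ⊢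
  induction z using Sym2.ind with
  | h x y =>
    rw [Sym2.mk_isDiag_iff] at hloop
    rw [show ({v | v ∈ s(x, y)} : Finset G.V) = {x, y} by ext; simp, card_pair hloop]

lemma existsUnique_edge_color (v : G.V) (c : Fin n) :
    ∃! e, v ∈ G.ends e ∧ G.color e = c := by
  have hinj : Set.InjOn G.color {e | v ∈ G.ends e} := fun e₁ h₁ e₂ h₂ hc =>
    by_contra fun hne => G.proper e₁ e₂ hne hc v ⟨h₁, h₂⟩
  have himage : G.color '' {e | v ∈ G.ends e} = Set.univ :=
    Set.eq_of_subset_of_ncard_le (Set.subset_univ _)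
      (by rw [hinj.ncard_image, G.regular, Set.ncard_univ, Nat.card_fin])
  obtain ⟨e, he, rfl⟩ : c ∈ G.color '' {e | v ∈ G.ends e} := himage ▸ Set.mem_univ c
  exact ⟨e, ⟨he, rfl⟩, fun e' ⟨he', hc⟩ => hinj he' he hc⟩

lemma ncard_edges_at_color_mem (v : G.V) (S : Set (Fin n)) :
    {e | v ∈ G.ends e ∧ G.color e ∈ S}.ncard = S.ncard := by
  have himage : G.color '' {e | v ∈ G.ends e ∧ G.color e ∈ S} = S := by
    refine Set.Subset.antisymm (Set.image_subset_iff.mpr fun e he => he.2) fun c hc => ?_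
    obtain ⟨e, ⟨he, rfl⟩, -⟩ := G.existsUnique_edge_color v c
    exact ⟨e, ⟨he, hc⟩, rfl⟩
  have hinj : Set.InjOn G.color {e | v ∈ G.ends e ∧ G.color e ∈ S} := fun _ h₁ _ h₂ hc =>
    (G.existsUnique_edge_color v _).unique ⟨h₁.1, hc⟩ ⟨h₂.1, rfl⟩
  rw [← hinj.ncard_image, himage]

abbrev EdgesIn (Δ : Set (Fin n)) : Type := {e : G.E // G.color e ∈ Δ}

lemma card_filter_edgesIn (Δ : Set (Fin n)) (P : G.E → Prop) [DecidablePred P] :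
    #{e : G.EdgesIn Δ | P e.1} = {e | P e ∧ G.color e ∈ Δ}.ncard := by
  rw [← Set.ncard_coe_finset, ← Set.ncard_image_of_injective _ Subtype.val_injective]
  congr 1
  ext e
  simp [and_comm]

lemma card_edgesIn_mul_two (Δ : Set (Fin n)) :
    Nat.card (G.EdgesIn Δ) * 2 = Nat.card G.V * Δ.ncard := by
  rw [Nat.card_eq_fintype_card, Nat.card_eq_fintype_card, ← card_univ, ← card_univ]
  refine card_mul_eq_card_mul (fun (e : G.EdgesIn Δ) v => v ∈ G.ends e.1)
    (fun e _ => ?_) (fun v _ => ?_)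
  · simpa [bipartiteAbove] using G.card_mem_ends e.1
  · rw [bipartiteBelow, ← G.ncard_edges_at_color_mem v Δ]
    exact G.card_filter_edgesIn Δ (v ∈ G.ends ·)

lemma reach_of_mem_ends {Δ : Set (Fin n)} {e : G.E} (he : G.color e ∈ Δ) {v w : G.V}
    (hv : v ∈ G.ends e) (hw : w ∈ G.ends e) : G.Reach Δ v w :=
  Relation.EqvGen.rel _ _ ⟨e, he, hv, hw⟩

lemma Reach.mono {G : ColoredGraph n} {Δ Δ' : Set (Fin n)} (h : Δ ⊆ Δ') {v w : G.V}
    (hr : G.Reach Δ v w) : G.Reach Δ' v w :=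
  Relation.EqvGen.mono (fun _ _ ⟨e, he, hv, hw⟩ => ⟨e, h he, hv, hw⟩) _ _ hr

lemma Reach.eq_of_forall_edge {G : ColoredGraph n} {Δ : Set (Fin n)} {α : Type*} {F : G.V → α}
    (hF : ∀ e, G.color e ∈ Δ → ∀ v ∈ G.ends e, ∀ w ∈ G.ends e, F v = F w) {v w : G.V}
    (h : G.Reach Δ v w) : F v = F w := by
  induction h with
  | rel v w h => obtain ⟨e, he, hv, hw⟩ := h; exact hF e he v hv w hw
  | refl => rfl
  | symm _ _ _ ih => exact ih.symm
  | trans _ _ _ _ _ ih₁ ih₂ => exact ih₁.trans ih₂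

lemma reach_of_numResidues_eq_one {Δ : Set (Fin n)} (h : G.numResidues Δ = 1) (v w : G.V) :
    G.Reach Δ v w := by
  rw [numResidues, Nat.card_eq_one_iff_unique] at h
  exact Quotient.exact (h.1.elim (Quotient.mk (G.residueSetoid Δ) v) (Quotient.mk _ w))

lemma mk_eq_of_mem_ends {S : Set (Fin n)} {e : G.E} (he : G.color e ∈ S) {v w : G.V}
    (hv : v ∈ G.ends e) (hw : w ∈ G.ends e) :
    Quotient.mk (G.residueSetoid S) v = Quotient.mk _ w :=
  Quotient.sound (G.reach_of_mem_ends he hv hw)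

noncomputable def incidence (e : G.E) : G.V → ZMod 2 := fun v => if v ∈ G.ends e then 1 else 0

noncomputable def boundary (Δ : Set (Fin n)) :
    (G.EdgesIn Δ → ZMod 2) →ₗ[ZMod 2] (G.V → ZMod 2) :=
  Fintype.linearCombination (ZMod 2) fun e => G.incidence e.1

lemma incidence_eq_single_add_single {e : G.E} {v w : G.V} (hv : v ∈ G.ends e)
    (hw : w ∈ G.ends e) (hvw : v ≠ w) :
    G.incidence e = Pi.single v 1 + Pi.single w 1 := by
  have hends := (Sym2.mem_and_mem_iff hvw).mp ⟨hv, hw⟩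
  ext x
  rcases eq_or_ne x v with rfl | hxv
  · simp [incidence, hv, hvw.symm]
  · rcases eq_or_ne x w with rfl | hxw
    · simp [incidence, hw, hxv]
    · simp [incidence, hends, hxv, hxw]

lemma single_sub_single_mem_range_boundary {Δ : Set (Fin n)} {v w : G.V} (h : G.Reach Δ v w) :
    Pi.single v 1 - Pi.single w 1 ∈ LinearMap.range (G.boundary Δ) := by
  induction h with
  | rel v w h =>
    obtain ⟨e, he, hv, hw⟩ := h
    rcases eq_or_ne v w with rfl | hvw
    · simp
    refine ⟨Pi.single ⟨e, he⟩ 1, ?_⟩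
    rw [boundary, Fintype.linearCombination_apply_single, one_smul,
      G.incidence_eq_single_add_single hv hw hvw]
    ext x
    simp [CharTwo.sub_eq_add]
  | refl => simp
  | symm _ _ _ ih => simpa using neg_mem ih
  | trans _ _ _ _ _ ih₁ ih₂ => simpa using add_mem ih₁ ih₂

lemma card_le_finrank_range_boundary_add_one {Δ : Set (Fin n)} (hconn : ∀ v w, G.Reach Δ v w) :
    Nat.card G.V ≤ finrank (ZMod 2) (LinearMap.range (G.boundary Δ)) + 1 := by
  rcases isEmpty_or_nonempty G.V with _ | ⟨⟨v₀⟩⟩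
  · simp
  set L := ZMod 2 ∙ (Pi.single v₀ 1 : G.V → ZMod 2)
  have htop : LinearMap.range (G.boundary Δ) ⊔ L = ⊤ := by
    refine eq_top_iff.mpr fun f _ => ?_
    rw [← Finset.univ_sum_single f]
    refine Submodule.sum_mem _ fun v _ => ?_
    rw [show Pi.single v (f v) = f v • Pi.single v (1 : ZMod 2) by
      rw [← Pi.single_smul', smul_eq_mul, mul_one]]
    refine Submodule.smul_mem _ _ ?_
    rw [← sub_add_cancel (Pi.single v 1) (Pi.single v₀ 1)]
    exact Submodule.add_mem_sup (G.single_sub_single_mem_range_boundary (hconn v v₀))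
      (Submodule.mem_span_singleton_self _)
  have hL : finrank (ZMod 2) L ≤ 1 := (finrank_span_le_card _).trans (by simp)
  have hsup := Submodule.finrank_add_le_finrank_add_finrank (LinearMap.range (G.boundary Δ)) L
  rw [htop, finrank_top, finrank_pi] at hsup
  rw [Nat.card_eq_fintype_card]
  omega

lemma finrank_ker_boundary_add_card_le {Δ : Set (Fin n)} (hconn : ∀ v w, G.Reach Δ v w) :
    finrank (ZMod 2) (LinearMap.ker (G.boundary Δ)) + Nat.card G.V ≤
      Nat.card (G.EdgesIn Δ) + 1 := by
  have := (G.boundary Δ).finrank_range_add_finrank_ker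
  rw [finrank_pi, ← Nat.card_eq_fintype_card] at this
  have := G.card_le_finrank_range_boundary_add_one hconn
  omega

noncomputable def face (Δ S : Set (Fin n)) (q : Quotient (G.residueSetoid S)) :
    G.EdgesIn Δ → ZMod 2 :=
  fun e => if G.color e.1 ∈ S ∧ ∃ v ∈ G.ends e.1, Quotient.mk _ v = q then 1 else 0

lemma face_apply_of_mem {Δ S : Set (Fin n)} (q : Quotient (G.residueSetoid S))
    {e : G.EdgesIn Δ} {v : G.V} (hv : v ∈ G.ends e.1) :
    G.face Δ S q e = if G.color e.1 ∈ S ∧ Quotient.mk _ v = q then 1 else 0 := by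
  refine if_congr
    ⟨fun ⟨hS, w, hw, hq⟩ => ⟨hS, ?_⟩, fun ⟨hS, hq⟩ => ⟨hS, v, hv, hq⟩⟩ rfl rfl
  rwa [G.mk_eq_of_mem_ends hS hv hw]

lemma boundary_face {Δ S : Set (Fin n)} (hSΔ : S ⊆ Δ) (q : Quotient (G.residueSetoid S))
    (v : G.V) :
    G.boundary Δ (G.face Δ S q) v = if Quotient.mk _ v = q then (S.ncard : ZMod 2) else 0 := by
  have hterm : ∀ e : G.EdgesIn Δ, (G.face Δ S q e • G.incidence e.1) v =
      if Quotient.mk _ v = q then (if v ∈ G.ends e.1 ∧ G.color e.1 ∈ S then 1 else 0)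
        else 0 := by
    intro e
    by_cases hv : v ∈ G.ends e.1
    · rw [Pi.smul_apply, G.face_apply_of_mem q hv]
      by_cases hq : Quotient.mk (G.residueSetoid S) v = q <;> simp [incidence, hv, hq]
    · simp [incidence, hv]
  have hcount : #{e : G.EdgesIn Δ | v ∈ G.ends e.1 ∧ G.color e.1 ∈ S} = S.ncard := by
    rw [G.card_filter_edgesIn Δ (fun e => v ∈ G.ends e ∧ G.color e ∈ S),
      ← G.ncard_edges_at_color_mem v S]
    congr 1
    ext e
    simpa using fun _ h => hSΔ h
  rw [boundary, Fintype.linearCombination_apply, Finset.sum_apply, Finset.sum_congr rfl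
    fun e _ => hterm e, Finset.sum_ite_irrel, Finset.sum_const_zero, Finset.sum_boole, hcount]

lemma boundary_face_eq_zero {Δ S : Set (Fin n)} (hSΔ : S ⊆ Δ) (hS : Even S.ncard)
    (q : Quotient (G.residueSetoid S)) : G.boundary Δ (G.face Δ S q) = 0 := by
  ext v
  rw [G.boundary_face hSΔ, (ZMod.natCast_eq_zero_iff_even).mpr hS, ite_self, Pi.zero_apply]

lemma sum_smul_face_apply {Δ S : Set (Fin n)} [DecidablePred (· ∈ S)]
    (c : Quotient (G.residueSetoid S) → ZMod 2)
    {e : G.EdgesIn Δ} {v : G.V} (hv : v ∈ G.ends e.1) :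
    ∑ q, c q • G.face Δ S q e = if G.color e.1 ∈ S then c (Quotient.mk _ v) else 0 := by
  simp only [G.face_apply_of_mem _ hv, smul_eq_mul, mul_ite, mul_one, mul_zero]
  by_cases hS : G.color e.1 ∈ S <;> simp [hS]

variable {r : ℕ} [Fact (1 < r)]

noncomputable def faceMap (ε : ZMod r → Fin n) :
    ((Σ i, Quotient (G.residueSetoid {ε i, ε (i + 1)})) → ZMod 2) →ₗ[ZMod 2]
      (G.EdgesIn (Set.range ε) → ZMod 2) :=
  Fintype.linearCombination (ZMod 2) fun x => G.face _ _ x.2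

lemma range_faceMap_le_ker_boundary {ε : ZMod r → Fin n} (hε : Function.Injective ε) :
    LinearMap.range (G.faceMap ε) ≤ LinearMap.ker (G.boundary (Set.range ε)) := by
  rintro _ ⟨c, rfl⟩
  refine Submodule.sum_mem _ fun x _ => Submodule.smul_mem _ _ ?_
  refine G.boundary_face_eq_zero ?_ ?_ x.2
  · simp [Set.insert_subset_iff]
  · rw [Set.ncard_pair (hε.ne (succ_ne_self _).symm)]
    exact even_two

lemma faceMap_apply {ε : ZMod r → Fin n}
    (c : (Σ i, Quotient (G.residueSetoid {ε i, ε (i + 1)})) → ZMod 2)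
    {e : G.EdgesIn (Set.range ε)} {v : G.V} (hv : v ∈ G.ends e.1) :
    G.faceMap ε c e =
      ∑ i, if G.color e.1 ∈ ({ε i, ε (i + 1)} : Set (Fin n)) then c ⟨i, Quotient.mk _ v⟩
        else 0 := by
  rw [faceMap, Fintype.linearCombination_apply, Finset.sum_apply, Fintype.sum_sigma]
  exact Finset.sum_congr rfl fun i _ => G.sum_smul_face_apply (fun q => c ⟨i, q⟩) hv

lemma eq_of_mem_ker_faceMap {ε : ZMod r → Fin n} (hε : Function.Injective ε)
    (hconn : ∀ v w, G.Reach (Set.range ε) v w) {c} (hc : c ∈ LinearMap.ker (G.faceMap ε))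
    (x y : Σ i, Quotient (G.residueSetoid {ε i, ε (i + 1)})) : c x = c y := by
  set F : ZMod r → G.V → ZMod 2 := fun i v => c ⟨i, Quotient.mk _ v⟩
  have hstep : ∀ i v, F (i + 1) v = F i v := by
    intro i v
    obtain ⟨e, ⟨hv, hcol⟩, -⟩ := G.existsUnique_edge_color v (ε (i + 1))
    have h := G.faceMap_apply c (e := ⟨e, hcol ▸ Set.mem_range_self _⟩) hv
    rw [LinearMap.mem_ker.mp hc] at h
    -- the edge of colour `ε (i + 1)` at `v` lies on the faces of the pairs `i` and `i + 1` only
    have hmem : ∀ j, (if ε (i + 1) ∈ ({ε j, ε (j + 1)} : Set (Fin n)) then F j v else 0) =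
        (if j = i + 1 then F j v else 0) + (if j = i then F j v else 0) := by
      intro j
      have hne : i + 1 ≠ i := succ_ne_self i
      by_cases h1 : j = i + 1
      · simp [h1, hne]
      · rcases eq_or_ne j i with rfl | h2
        · simp [h1]
        · simp [hε.eq_iff, h1, h2, Ne.symm h1, Ne.symm h2]
    simp only [hcol] at h
    rw [Finset.sum_congr rfl fun j _ => hmem j, Finset.sum_add_distrib, Finset.sum_ite_eq',
      Finset.sum_ite_eq', if_pos (Finset.mem_univ _), if_pos (Finset.mem_univ _)] at h
    rwa [Pi.zero_apply, eq_comm, ← CharTwo.sub_eq_add, sub_eq_zero] at h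
  have hindex : ∀ i j v, F i v = F j v := by
    intro i j v
    have hper : Function.Periodic (F · v) 1 := fun i => hstep i v
    simpa [ZMod.natCast_zmod_val] using (hper.nat_mul (j - i).val i).symm
  have hvertex : ∀ v w, F 0 v = F 0 w := fun v w =>
    (hconn v w).eq_of_forall_edge fun e he v hv w hw => by
      obtain ⟨i, hi⟩ := he
      rw [hindex 0 i v, hindex 0 i w]
      simp only [F, G.mk_eq_of_mem_ends (S := {ε i, ε (i + 1)}) (by simp [← hi]) hv hw]
  obtain ⟨i, q⟩ := x
  obtain ⟨j, q'⟩ := y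
  induction q using Quotient.ind
  induction q' using Quotient.ind
  exact (hindex i 0 _).trans ((hvertex _ _).trans (hindex 0 j _))

theorem sum_numResidues_add_card_le {ε : ZMod r → Fin n} (hε : Function.Injective ε)
    (hconn : ∀ v w, G.Reach (Set.range ε) v w) :
    ∑ i, G.numResidues {ε i, ε (i + 1)} + Nat.card G.V ≤
      Nat.card (G.EdgesIn (Set.range ε)) + 2 := by
  have hker := Submodule.finrank_le_one_of_forall_eq _ fun c hc =>
    G.eq_of_mem_ker_faceMap hε hconn hc
  have hrange := Submodule.finrank_mono (G.range_faceMap_le_ker_boundary hε)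
  have hrn := (G.faceMap ε).finrank_range_add_finrank_ker
  have hcycle := G.finrank_ker_boundary_add_card_le hconn
  rw [finrank_pi, ← Nat.card_eq_fintype_card, Nat.card_sigma] at hrn
  simp only [numResidues]
  omega

end General

section Rotation

abbrev ColorCycle (r n : ℕ) : Type := {ε : ZMod r → Fin n // Function.Bijective ε}

variable {n : ℕ} (G : ColoredGraph n) {r : ℕ} [NeZero r]

noncomputable def residueSum (ε : ZMod r → Fin n) (δ : ZMod r) : ℕ :=
  ∑ j, G.numResidues {ε j, ε (j + δ)}

lemma sum_numResidues_add_add (ε : ZMod r → Fin n) (a b : ZMod r) :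
    ∑ m, G.numResidues {ε (m + a), ε (m + b)} = G.residueSum ε (b - a) :=
  Fintype.sum_equiv (Equiv.addRight a) _ _ fun m => by simp [add_assoc]

lemma residueSum_neg (ε : ZMod r → Fin n) (δ : ZMod r) :
    G.residueSum ε (-δ) = G.residueSum ε δ := by
  calc G.residueSum ε (-δ) = ∑ m, G.numResidues {ε (m + δ), ε (m + 0)} := by
        rw [sum_numResidues_add_add, zero_sub]
    _ = ∑ m, G.numResidues {ε (m + 0), ε (m + δ)} :=
        Finset.sum_congr rfl fun m _ => by rw [Set.pair_comm]
    _ = G.residueSum ε δ := by rw [sum_numResidues_add_add, sub_zero]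

lemma residueSum_comp_mul (ε : ZMod r → Fin n) (u : (ZMod r)ˣ) (δ : ZMod r) :
    G.residueSum (fun j : ZMod r => ε (u * j)) δ = G.residueSum ε (u * δ) :=
  Fintype.sum_equiv (Units.mulLeft u) _ _ fun j => by simp [mul_add]

lemma sum_residueSum_mul_unit (u : (ZMod r)ˣ) (δ : ZMod r) :
    ∑ ε : ColorCycle r n, G.residueSum ε.1 (u * δ) =
      ∑ ε : ColorCycle r n, G.residueSum ε.1 δ := by
  let Φ : ColorCycle r n ≃ ColorCycle r n :=
    (Equiv.arrowCongr (Units.mulLeft u) (Equiv.refl _)).subtypeEquiv fun ε =>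
      (Equiv.bijective_comp _ ε).symm
  rw [← Φ.sum_comp]
  refine Finset.sum_congr rfl fun ε _ => ?_
  rw [← G.residueSum_comp_mul]
  congr 1
  funext j
  show (Equiv.arrowCongr (Units.mulLeft u) (Equiv.refl _) ε.1) (u * j) = ε.1 j
  simp

end Rotation

section FiveColors

variable (G : ColoredGraph 5) {p : ℕ}

lemma residueSum_one_add_residueSum_two_le (hp : Fintype.card G.V = 2 * p)
    (hsc : G.Supercontracted) {ε : ZMod 5 → Fin 5} (hε : Function.Bijective ε) :
    G.residueSum ε 1 + G.residueSum ε 2 ≤ 5 * p + 5 := by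
  obtain ⟨τ, hτ_inj, hτ_range, hτ_step, hτ0, hτ1, hτ2, hτ3⟩ :
      ∃ τ : ZMod 4 → ZMod 5, Function.Injective τ ∧ (∀ d, d ≠ 0 → ∃ k, τ k = d) ∧
        (∀ k, τ (k + 1) - τ k = τ k) ∧
        τ 0 = 1 ∧ τ 1 = 2 ∧ τ 2 = -1 ∧ τ 3 = -2 := by
    refine ⟨fun k => 2 ^ k.val, ?_, ?_, ?_, ?_⟩ <;> decide
  have hcycle : ∀ m, ∑ k, G.numResidues {ε (m + τ k), ε (m + τ (k + 1))} ≤ 2 * p + 2 := by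
    intro m
    have : Fact (1 < 4) := ⟨by norm_num⟩
    have hinj : Function.Injective fun k => ε (m + τ k) :=
      hε.1.comp ((add_right_injective m).comp hτ_inj)
    have hconn : ∀ v w, G.Reach (Set.range fun k => ε (m + τ k)) v w := fun v w =>
      (G.reach_of_numResidues_eq_one (hsc (ε m)) v w).mono fun x hx => by
        obtain ⟨j, rfl⟩ := hε.2 x
        obtain ⟨k, hk⟩ := hτ_range (j - m) (sub_ne_zero.mpr fun h => hx (h ▸ rfl))
        exact ⟨k, by simp [hk]⟩
    have hE := G.card_edgesIn_mul_two (Set.range fun k => ε (m + τ k))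
    have heuler := G.sum_numResidues_add_card_le hinj hconn
    rw [Set.ncard_range_of_injective hinj, Nat.card_eq_fintype_card (α := ZMod 4), ZMod.card,
      Nat.card_eq_fintype_card (α := G.V), hp] at hE
    rw [Nat.card_eq_fintype_card (α := G.V), hp] at heuler
    omega
  have hsum : ∑ m, ∑ k, G.numResidues {ε (m + τ k), ε (m + τ (k + 1))} =
      2 * (G.residueSum ε 1 + G.residueSum ε 2) := by
    rw [Finset.sum_comm]
    simp only [G.sum_numResidues_add_add, hτ_step]
    rw [show ∀ f : ZMod 4 → ℕ, ∑ k, f k = f 0 + f 1 + f 2 + f 3 from Fin.sum_univ_four,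
      hτ0, hτ1, hτ2, hτ3, residueSum_neg, residueSum_neg]
    ring
  have := Finset.sum_le_sum fun m (_ : m ∈ Finset.univ) => hcycle m
  rw [hsum, Finset.sum_const, Finset.card_univ, ZMod.card, smul_eq_mul] at this
  omega

lemma card_colorCycle_five : Fintype.card (ColorCycle 5 5) = 120 := by
  rw [Fintype.card_congr Equiv.bijectiveEquiv,
    Fintype.card_equiv (α := ZMod 5) (β := Fin 5) (Equiv.refl _)]
  rfl

lemma two_mul_sum_residueSum_le (hp : Fintype.card G.V = 2 * p) (hsc : G.Supercontracted) :
    2 * ∑ ε : ColorCycle 5 5, G.residueSum ε.1 1 ≤ 120 * (5 * p + 5) := by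
  have hswap := G.sum_residueSum_mul_unit (ZMod.unitOfCoprime 2 (by norm_num) : (ZMod 5)ˣ) 1
  rw [ZMod.coe_unitOfCoprime, mul_one, Nat.cast_ofNat] at hswap
  calc _ = ∑ ε : ColorCycle 5 5, (G.residueSum ε.1 1 + G.residueSum ε.1 2) := by
        rw [Finset.sum_add_distrib, hswap, two_mul]
    _ ≤ ∑ _ε : ColorCycle 5 5, (5 * p + 5) :=
        Finset.sum_le_sum fun ε _ => G.residueSum_one_add_residueSum_two_le hp hsc ε.2
    _ = 120 * (5 * p + 5) := by
        rw [Finset.sum_const, Finset.card_univ, card_colorCycle_five, smul_eq_mul]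

lemma gDegree_eq (p : ℕ) :
    G.gDegree p = (120 * (2 + 3 * p) -
      ∑ ε : ColorCycle 5 5, (G.residueSum ε.1 1 : ℚ)) / 20 := by
  have hterm : ∀ ε : ColorCycle 5 5,
      1 / 10 * ((2 - (∑ j, (G.numResidues {ε.1 j, ε.1 (j + 1)} : ℚ) - 3 * p)) / 2) =
        (2 + 3 * p) / 20 - (G.residueSum ε.1 1 : ℚ) / 20 := fun ε => by
    rw [residueSum, Nat.cast_sum]
    ring
  rw [gDegree, finsum_eq_sum_of_fintype, Finset.mul_sum, Finset.sum_congr rfl fun ε _ => hterm ε,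
    Finset.sum_sub_distrib, Finset.sum_const, Finset.card_univ, card_colorCycle_five,
    ← Finset.sum_div]
  ring

end FiveColors

end ColoredGraph

/-- a supercontracted 5-colored graph of order 2p has reduced
G-degree ω'_G(Γ) = ω_G(Γ)/3 at least p − 1. -/
theorem supercontracted_reduced_Gdegree_ge (G : ColoredGraph 5) (p : ℕ)
    (hp : Fintype.card G.V = 2 * p) (hsc : G.Supercontracted) :
    (p : ℚ) - 1 ≤ G.gDegree p / 3 := by
  have hsum : 2 * ∑ ε : ColoredGraph.ColorCycle 5 5, (G.residueSum ε.1 1 : ℚ) ≤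
      120 * (5 * p + 5) := by
    exact_mod_cast G.two_mul_sum_residueSum_le hp hsc
  rw [G.gDegree_eq p]
  linarith
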